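/- arXiv:2212.09429 — 7 statements merged into one kernel-verified Lean document; each statement's English description precedes it below -/
import Mathlib

section
/- Let ℱ_uns be the class of ALL reward functions f : 𝒳 × 𝒜 → ℝ, and let f be a reward function with a unique optimal arm in every context. Then C(f, ℱ_uns) = Σ_{x∈𝒳} Σ_{a ≠ π*_f(x)} 2/Δ_f(x,a). -/
open scoped ENNReal

/-- The instance-dependent complexity `C(f, ℱ)`: infimum over nonnegative
allocations `η` of the regret `∑ η(x,a) Δ_f(x,a)` subject to the information
constraint `∑ η(x,a) (1/2)(f(x,a) - f'(x,a))² ≥ 1` for every alternative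
`f' ∈ Λ(f, ℱ)`. The value is `⊤` when no feasible allocation exists.
Here `π` is the (unique) optimal policy of `f`. -/
noncomputable def Complexity {X A : Type*} [Fintype X] [Fintype A]
    (f : X → A → ℝ) (π : X → A) (F : Set (X → A → ℝ)) : ℝ≥0∞ :=
  sInf { c : ℝ≥0∞ | ∃ η : X → A → ℝ,
    (∀ x a, 0 ≤ η x a) ∧
    (∀ f' ∈ F, (∃ x, ∃ a, a ≠ π x ∧ f' x (π x) < f' x a) →
      1 ≤ ∑ x, ∑ a, η x a * (1 / 2 * (f x a - f' x a) ^ 2)) ∧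
    c = ENNReal.ofReal (∑ x, ∑ a, η x a * (f x (π x) - f x a)) }

/-- `π x` is the unique optimal arm of `f` in every context `x`. -/
def UniqueOpt {X A : Type*} (f : X → A → ℝ) (π : X → A) : Prop :=
  ∀ x a, a ≠ π x → f x a < f x (π x)

/-- The class of reward functions that are linear in the representation `φ`. -/
def linClass {X A κ : Type*} [Fintype κ] (φ : X → A → κ → ℝ) :
    Set (X → A → ℝ) :=
  { f | ∃ θ : κ → ℝ, ∀ x a, f x a = ∑ j, φ x a j * θ j }

/-! A feasible allocation must detect, for each suboptimal `(x, a)`, the alternative that raises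
`f x a` just above `f x (π x)` and agrees with `f` elsewhere; this forces `η x a ≥ 2 / Δ²`, so the
regret is at least `∑ 2 / Δ`. Conversely, sampling the optimal arm costs nothing, so weight
`(1 + t) · 2 / Δ²` on each suboptimal arm together with a large enough weight on the optimal arm
is feasible, with regret `(1 + t) ∑ 2 / Δ`; let `t → 0`. -/

open Finset

section Allocation

variable {X A : Type*} [Fintype X] [Fintype A]

noncomputable def information (η f f' : X → A → ℝ) : ℝ :=
  ∑ x, ∑ a, η x a * (1 / 2 * (f x a - f' x a) ^ 2)

def regret (f : X → A → ℝ) (π : X → A) (η : X → A → ℝ) : ℝ :=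
  ∑ x, ∑ a, η x a * (f x (π x) - f x a)

def IsFeasibleAlloc (f : X → A → ℝ) (π : X → A) (F : Set (X → A → ℝ))
    (η : X → A → ℝ) : Prop :=
  (∀ x a, 0 ≤ η x a) ∧
    ∀ f' ∈ F, (∃ x, ∃ a, a ≠ π x ∧ f' x (π x) < f' x a) → 1 ≤ information η f f'

variable {f : X → A → ℝ} {π : X → A} {F : Set (X → A → ℝ)} {η : X → A → ℝ}

theorem complexity_le_of_isFeasibleAlloc (hη : IsFeasibleAlloc f π F η) :
    Complexity f π F ≤ ENNReal.ofReal (regret f π η) :=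
  sInf_le ⟨η, hη.1, hη.2, rfl⟩

theorem le_complexity {c : ℝ≥0∞}
    (h : ∀ η, IsFeasibleAlloc f π F η → c ≤ ENNReal.ofReal (regret f π η)) :
    c ≤ Complexity f π F :=
  le_sInf <| by
    rintro _ ⟨η, hη₀, hη₁, rfl⟩
    exact h η ⟨hη₀, hη₁⟩

theorem regret_eq_sum_ne [DecidableEq A] :
    regret f π η = ∑ x, ∑ a ∈ univ.filter (fun a => a ≠ π x), η x a * (f x (π x) - f x a) :=
  sum_congr rfl fun x _ => by
    refine (sum_filter_of_ne fun a _ h => ?_).symm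
    rintro rfl
    simp at h

theorem information_update [DecidableEq X] [DecidableEq A] (x : X) (a : A) (c : ℝ) :
    information η f (Function.update f x (Function.update (f x) a c)) =
      η x a * (1 / 2 * (f x a - c) ^ 2) := by
  rw [information, sum_eq_single x, sum_eq_single a]
  · simp
  · intro b _ hb; simp [hb]
  · simp
  · intro y _ hy; simp [hy]
  · simp

theorem information_pair_le [DecidableEq A] (hη : ∀ x a, 0 ≤ η x a) (f' : X → A → ℝ)
    (x : X) {a b : A} (hab : a ≠ b) :
    η x a * (1 / 2 * (f x a - f' x a) ^ 2) + η x b * (1 / 2 * (f x b - f' x b) ^ 2) ≤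
      information η f f' := by
  have hterm : ∀ y c, 0 ≤ η y c * (1 / 2 * (f y c - f' y c) ^ 2) := fun y c =>
    mul_nonneg (hη y c) (by positivity)
  calc _ = ∑ c ∈ {a, b}, η x c * (1 / 2 * (f x c - f' x c) ^ 2) := (sum_pair hab).symm
    _ ≤ ∑ c, η x c * (1 / 2 * (f x c - f' x c) ^ 2) :=
      sum_le_sum_of_subset_of_nonneg (subset_univ _) fun c _ _ => hterm x c
    _ ≤ information η f f' :=
      single_le_sum (f := fun y => ∑ c, η y c * (1 / 2 * (f y c - f' y c) ^ 2))
        (fun y _ => sum_nonneg fun c _ => hterm y c) (mem_univ x)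

end Allocation

theorem le_of_forall_lt_le_of_continuousAt {β : Type*} [TopologicalSpace β] [Preorder β]
    [ClosedIciTopology β] {g : ℝ → β} {c : ℝ} {b : β} (hg : ContinuousAt g c)
    (h : ∀ t, c < t → b ≤ g t) : b ≤ g c :=
  ge_of_tendsto (hg.tendsto.mono_left nhdsWithin_le_nhds)
    (eventually_nhdsWithin_of_forall (s := Set.Ioi c) h)

theorem add_sq_le_one_add_mul_sq_add {t : ℝ} (ht : 0 < t) (u v : ℝ) :
    (u + v) ^ 2 ≤ (1 + t) * u ^ 2 + (1 + t⁻¹) * v ^ 2 := by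
  have hsq : 0 ≤ (t * u - v) ^ 2 / t := by positivity
  have hexpand :
      (t * u - v) ^ 2 / t = (1 + t) * u ^ 2 + (1 + t⁻¹) * v ^ 2 - (u + v) ^ 2 := by
    field_simp
    ring
  linarith

section Unstructured

variable {X A : Type*} [Fintype A] [DecidableEq A] {f : X → A → ℝ} {π : X → A}

/-- Feasible by `add_sq_le_one_add_mul_sq_add`: an alternative at `(x, a)` must move `f x a` up by
`u` and `f x (π x)` down by `v` with `u + v > Δ`. -/
noncomputable def slackAlloc (f : X → A → ℝ) (π : X → A) (t : ℝ) : X → A → ℝ := fun x a =>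
  if a = π x then (1 + t⁻¹) * ∑ b ∈ univ.filter (fun b => b ≠ π x), 2 / (f x (π x) - f x b) ^ 2
  else (1 + t) * (2 / (f x (π x) - f x a) ^ 2)

theorem slackAlloc_nonneg {t : ℝ} (ht : 0 < t) (x : X) (a : A) : 0 ≤ slackAlloc f π t x a := by
  unfold slackAlloc
  split_ifs
  · exact mul_nonneg (by positivity) (sum_nonneg fun b _ => by positivity)
  · positivity

variable [Fintype X]

noncomputable def inverseGapSum (f : X → A → ℝ) (π : X → A) : ℝ :=
  ∑ x, ∑ a ∈ univ.filter (fun a => a ≠ π x), 2 / (f x (π x) - f x a)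

theorem two_div_gap_le_of_isFeasibleAlloc {η : X → A → ℝ} (hπ : UniqueOpt f π)
    (hη : IsFeasibleAlloc f π Set.univ η) {x : X} {a : A} (ha : a ≠ π x) :
    2 / (f x (π x) - f x a) ≤ η x a * (f x (π x) - f x a) := by
  classical
  have hgap : 0 < f x (π x) - f x a := sub_pos.2 (hπ x a ha)
  have hlift : ∀ c, f x (π x) < c → 1 ≤ η x a * (1 / 2 * (f x a - c) ^ 2) := fun c hc => by
    rw [← information_update]
    exact hη.2 _ (Set.mem_univ _) ⟨x, a, ha, by simpa [ha.symm] using hc⟩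
  have hlim : 1 ≤ η x a * (1 / 2 * (f x a - f x (π x)) ^ 2) :=
    le_of_forall_lt_le_of_continuousAt (g := fun c => η x a * (1 / 2 * (f x a - c) ^ 2))
      (by fun_prop) hlift
  rw [div_le_iff₀ hgap]
  nlinarith

theorem inverseGapSum_le_complexity_univ (hπ : UniqueOpt f π) :
    ENNReal.ofReal (inverseGapSum f π) ≤ Complexity f π Set.univ := by
  refine le_complexity fun η hη => ENNReal.ofReal_le_ofReal ?_
  rw [regret_eq_sum_ne, inverseGapSum]
  gcongr with x _ a ha
  exact two_div_gap_le_of_isFeasibleAlloc hπ hη (mem_filter.1 ha).2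

theorem regret_slackAlloc (hπ : UniqueOpt f π) (t : ℝ) :
    regret f π (slackAlloc f π t) = (1 + t) * inverseGapSum f π := by
  rw [regret_eq_sum_ne, inverseGapSum, mul_sum]
  refine sum_congr rfl fun x _ => ?_
  rw [mul_sum]
  refine sum_congr rfl fun a ha => ?_
  have ha : a ≠ π x := (mem_filter.1 ha).2
  have hgap : f x (π x) - f x a ≠ 0 := (sub_pos.2 (hπ x a ha)).ne'
  simp only [slackAlloc, if_neg ha]
  field_simp

theorem isFeasibleAlloc_slackAlloc (hπ : UniqueOpt f π) {t : ℝ} (ht : 0 < t) :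
    IsFeasibleAlloc f π Set.univ (slackAlloc f π t) := by
  refine ⟨slackAlloc_nonneg ht, ?_⟩
  rintro f' - ⟨x, a, ha, hlt⟩
  set Δ := f x (π x) - f x a with hΔ
  have hgap : 0 < Δ := sub_pos.2 (hπ x a ha)
  set u := f' x a - f x a
  set v := f x (π x) - f' x (π x)
  have hopt : (1 + t⁻¹) * (2 / Δ ^ 2) ≤ slackAlloc f π t x (π x) := by
    simp only [slackAlloc]
    refine mul_le_mul_of_nonneg_left ?_ (by positivity)
    exact single_le_sum (f := fun b => 2 / (f x (π x) - f x b) ^ 2)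
      (fun b _ => by positivity) (mem_filter.2 ⟨mem_univ a, ha⟩)
  calc (1 : ℝ) ≤ (u + v) ^ 2 / Δ ^ 2 := by
        rw [one_le_div (by positivity)]
        exact pow_le_pow_left₀ hgap.le (by linarith) 2
    _ ≤ ((1 + t) * u ^ 2 + (1 + t⁻¹) * v ^ 2) / Δ ^ 2 := by
        gcongr
        exact add_sq_le_one_add_mul_sq_add ht u v
    _ = slackAlloc f π t x a * (1 / 2 * (f x a - f' x a) ^ 2) +
          (1 + t⁻¹) * (2 / Δ ^ 2) * (1 / 2 * v ^ 2) := by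
        simp only [slackAlloc, if_neg ha, ← hΔ]
        have hu : (f x a - f' x a) ^ 2 = u ^ 2 := by ring
        rw [hu]
        field_simp
    _ ≤ slackAlloc f π t x a * (1 / 2 * (f x a - f' x a) ^ 2) +
          slackAlloc f π t x (π x) * (1 / 2 * v ^ 2) := by
        gcongr
    _ ≤ information (slackAlloc f π t) f f' :=
        information_pair_le (slackAlloc_nonneg ht) f' x ha

theorem complexity_univ_le_inverseGapSum (hπ : UniqueOpt f π) :
    Complexity f π Set.univ ≤ ENNReal.ofReal (inverseGapSum f π) := by
  have hslack : ∀ t, 0 < t →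
      Complexity f π Set.univ ≤ ENNReal.ofReal ((1 + t) * inverseGapSum f π) := fun t ht =>
    regret_slackAlloc hπ t ▸ complexity_le_of_isFeasibleAlloc (isFeasibleAlloc_slackAlloc hπ ht)
  simpa using le_of_forall_lt_le_of_continuousAt
    (g := fun t => ENNReal.ofReal ((1 + t) * inverseGapSum f π))
    (ENNReal.continuous_ofReal.comp (by fun_prop)).continuousAt hslack

end Unstructured

theorem complexity_unstructured_general {X A : Type*} [Fintype X] [Fintype A] [DecidableEq A]
    (f : X → A → ℝ) (π : X → A) (hπ : UniqueOpt f π) :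
    Complexity f π (Set.univ : Set (X → A → ℝ)) =
      ENNReal.ofReal (∑ x, ∑ a ∈ Finset.univ.filter (fun a => a ≠ π x),
        2 / (f x (π x) - f x a)) :=
  le_antisymm (complexity_univ_le_inverseGapSum hπ) (inverseGapSum_le_complexity_univ hπ)

/-- The complexity of the unstructured class (all reward functions) is the
sum of inverse gaps `∑_x ∑_{a ≠ π x} 2 / Δ_f(x,a)`. -/
theorem complexity_unstructured {X A : Type*} [Fintype X] [Fintype A] [DecidableEq A]
    [Nonempty X] [Nonempty A]
    (f : X → A → ℝ) (π : X → A) (hπ : UniqueOpt f π) :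
    Complexity f π (Set.univ : Set (X → A → ℝ)) =
      ENNReal.ofReal (∑ x, ∑ a ∈ Finset.univ.filter (fun a => a ≠ π x),
        2 / (f x (π x) - f x a)) :=
  complexity_unstructured_general f π hπ
end

section
/- Let F be a real n×d matrix, D a diagonal n×n matrix with nonnegative entries, f ∈ ℝⁿ, and suppose V := FᵀDF is invertible. Set θ* := V⁻¹FᵀDf and let z ∈ ℝ^d be nonzero. If ⟨z, θ*⟩ ≤ 0, then the minimum of g(θ) := (f − Fθ)ᵀD(f − Fθ) over the half-space {θ ∈ ℝ^d : ⟨z, θ⟩ ≥ 0} equals g(θ*) + ⟨z, θ*⟩² / (zᵀV⁻¹z), and it is attained at θ̂ := θ* − (⟨z, θ*⟩ / (zᵀV⁻¹z))·V⁻¹z. If instead ⟨z, θ*⟩ ≥ 0, the minimum over the half-space equals the unconstrained minimum g(θ*). -/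
/-!
Since `θ*` solves the normal equations, `g θ = g θ* + (θ - θ*)ᵀ V (θ - θ*)` with `V` positive
definite. Cauchy–Schwarz for the inner product given by `V` yields
`⟨z, q⟩² ≤ (zᵀV⁻¹z) (qᵀVq)`, and on the half-space `⟨z, θ - θ*⟩ ≥ -⟨z, θ*⟩ ≥ 0`. Hence
`g θ ≥ g θ* + ⟨z, θ*⟩² / (zᵀV⁻¹z)`, with equality at `θ̂`, which lies on the boundary hyperplane
and is the equality case of Cauchy–Schwarz. When `⟨z, θ*⟩ ≥ 0` the unconstrained minimizer is
feasible.
-/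

open Matrix

namespace Matrix

theorem PosSemidef.of_isDiag {R n : Type*} [Fintype n] [DecidableEq n] [Ring R]
    [PartialOrder R] [StarRing R] [StarOrderedRing R] {D : Matrix n n R} (hD : D.IsDiag)
    (hdiag : ∀ i, 0 ≤ D i i) : D.PosSemidef :=
  hD.diagonal_diag ▸ PosSemidef.diagonal hdiag

/-- At a solution `θ₀` of the normal equations the residual `f - F θ₀` is `D`-orthogonal to the
range of `F`, so the cross term vanishes. -/
theorem residual_dotProduct_eq_add_of_normal_eq {R m n : Type*} [CommRing R] [Fintype m]
    [Fintype n] {F : Matrix m n R} {D : Matrix m m R} (hD : Dᵀ = D) {f : m → R} {θ₀ : n → R}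
    (h₀ : (Fᵀ * D * F) *ᵥ θ₀ = (Fᵀ * D) *ᵥ f) (θ : n → R) :
    (f - F *ᵥ θ) ⬝ᵥ D *ᵥ (f - F *ᵥ θ) =
      (f - F *ᵥ θ₀) ⬝ᵥ D *ᵥ (f - F *ᵥ θ₀) + (θ - θ₀) ⬝ᵥ (Fᵀ * D * F) *ᵥ (θ - θ₀) := by
  have hres : f - F *ᵥ θ = (f - F *ᵥ θ₀) - F *ᵥ (θ - θ₀) := by
    rw [mulVec_sub]
    abel
  have hr : (Fᵀ * D) *ᵥ (f - F *ᵥ θ₀) = 0 := by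
    rw [mulVec_sub, mulVec_mulVec, ← h₀, sub_self]
  rw [hres]
  generalize f - F *ᵥ θ₀ = r at hr ⊢
  generalize θ - θ₀ = q
  have hcross : F *ᵥ q ⬝ᵥ D *ᵥ r = 0 := by
    rw [dotProduct_comm, dotProduct_mulVec, ← mulVec_transpose, mulVec_mulVec, hr,
      zero_dotProduct]
  have hcross' : r ⬝ᵥ D *ᵥ (F *ᵥ q) = 0 := by
    rw [dotProduct_mulVec, ← mulVec_transpose, hD, dotProduct_comm, hcross]
  have hquad : q ⬝ᵥ (Fᵀ * D * F) *ᵥ q = F *ᵥ q ⬝ᵥ D *ᵥ (F *ᵥ q) := by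
    rw [← mulVec_mulVec, ← mulVec_mulVec, dotProduct_mulVec, vecMul_transpose]
  rw [hquad, mulVec_sub, dotProduct_sub, sub_dotProduct, sub_dotProduct, hcross, hcross']
  ring

theorem PosDef.sq_dotProduct_le {ι : Type*} [Fintype ι] [DecidableEq ι] {V : Matrix ι ι ℝ}
    (hV : V.PosDef) (z q : ι → ℝ) :
    (z ⬝ᵥ q) ^ 2 ≤ (z ⬝ᵥ V⁻¹ *ᵥ z) * (q ⬝ᵥ V *ᵥ q) := by
  set u := V⁻¹ *ᵥ z
  have hVu : V *ᵥ u = z := by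
    rw [mulVec_mulVec, mul_nonsing_inv _ ((isUnit_iff_isUnit_det V).mp hV.isUnit), one_mulVec]
  have hVsymm : Vᵀ = V := by
    simpa [conjTranspose_eq_transpose_of_trivial] using hV.isHermitian.eq
  have huq : u ⬝ᵥ V *ᵥ q = z ⬝ᵥ q := by
    rw [dotProduct_mulVec, ← mulVec_transpose, hVsymm, hVu, dotProduct_comm]
  have hnonneg : ∀ x : ℝ, 0 ≤ (z ⬝ᵥ u) * (x * x) + 2 * (z ⬝ᵥ q) * x + q ⬝ᵥ V *ᵥ q := by
    intro x
    have := hV.posSemidef.dotProduct_mulVec_nonneg (q + x • u)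
    rw [star_trivial, mulVec_add, mulVec_smul, hVu, add_dotProduct, dotProduct_add,
      dotProduct_add, smul_dotProduct, smul_dotProduct, dotProduct_smul, dotProduct_smul, huq,
      dotProduct_comm q z, dotProduct_comm u z, smul_eq_mul, smul_eq_mul, smul_eq_mul] at this
    linarith
  have := discrim_le_zero hnonneg
  rw [discrim] at this
  linarith

end Matrix

section HalfSpace

variable {ι : Type*} [Fintype ι] {V : Matrix ι ι ℝ} {g : (ι → ℝ) → ℝ}
  {θ₀ z : ι → ℝ}

theorem isLeast_halfspace_of_nonneg (hV : V.PosSemidef)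
    (hg : ∀ θ, g θ = g θ₀ + (θ - θ₀) ⬝ᵥ V *ᵥ (θ - θ₀)) (h : 0 ≤ z ⬝ᵥ θ₀) :
    IsLeast {y | ∃ θ, 0 ≤ z ⬝ᵥ θ ∧ y = g θ} (g θ₀) := by
  refine ⟨⟨θ₀, h, rfl⟩, ?_⟩
  rintro _ ⟨θ, -, rfl⟩
  rw [hg θ]
  exact le_add_of_nonneg_right (by simpa using hV.dotProduct_mulVec_nonneg (θ - θ₀))

theorem isLeast_halfspace_of_nonpos [DecidableEq ι] (hV : V.PosDef)
    (hg : ∀ θ, g θ = g θ₀ + (θ - θ₀) ⬝ᵥ V *ᵥ (θ - θ₀)) (hz : z ≠ 0) (h : z ⬝ᵥ θ₀ ≤ 0) :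
    IsLeast {y | ∃ θ, 0 ≤ z ⬝ᵥ θ ∧ y = g θ} (g θ₀ + (z ⬝ᵥ θ₀) ^ 2 / (z ⬝ᵥ V⁻¹ *ᵥ z)) ∧
      0 ≤ z ⬝ᵥ (θ₀ - ((z ⬝ᵥ θ₀) / (z ⬝ᵥ V⁻¹ *ᵥ z)) • V⁻¹ *ᵥ z) ∧
      g (θ₀ - ((z ⬝ᵥ θ₀) / (z ⬝ᵥ V⁻¹ *ᵥ z)) • V⁻¹ *ᵥ z) =
        g θ₀ + (z ⬝ᵥ θ₀) ^ 2 / (z ⬝ᵥ V⁻¹ *ᵥ z) := by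
  set a := z ⬝ᵥ θ₀
  set c := z ⬝ᵥ V⁻¹ *ᵥ z with hc_def
  have hc : 0 < c := by simpa using hV.inv.dotProduct_mulVec_pos hz
  have hproj : z ⬝ᵥ (θ₀ - (a / c) • V⁻¹ *ᵥ z) = 0 := by
    rw [dotProduct_sub, dotProduct_smul, smul_eq_mul, div_mul_cancel₀ _ hc.ne', sub_self]
  have hval : g (θ₀ - (a / c) • V⁻¹ *ᵥ z) = g θ₀ + a ^ 2 / c := by
    rw [hg, sub_sub_cancel_left, mulVec_neg, mulVec_smul, mulVec_mulVec,
      mul_nonsing_inv _ ((isUnit_iff_isUnit_det V).mp hV.isUnit), one_mulVec, neg_dotProduct,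
      dotProduct_neg, neg_neg, smul_dotProduct, dotProduct_smul, smul_eq_mul, smul_eq_mul,
      dotProduct_comm _ z, ← hc_def]
    field_simp
  refine ⟨⟨⟨_, hproj.ge, hval.symm⟩, ?_⟩, hproj.ge, hval⟩
  rintro _ ⟨θ, hθ, rfl⟩
  have hshift : a ^ 2 ≤ (z ⬝ᵥ (θ - θ₀)) ^ 2 := by
    rw [dotProduct_sub]
    nlinarith
  calc g θ₀ + a ^ 2 / c
      ≤ g θ₀ + (z ⬝ᵥ (θ - θ₀)) ^ 2 / c := by gcongr
    _ ≤ g θ₀ + (θ - θ₀) ⬝ᵥ V *ᵥ (θ - θ₀) := by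
        gcongr
        rw [div_le_iff₀ hc]
        linarith [hV.sq_dotProduct_le z (θ - θ₀)]
    _ = g θ := (hg θ).symm

end HalfSpace

theorem halfspace_least_squares_general {n d : ℕ}
    (F : Matrix (Fin n) (Fin d) ℝ) (D : Matrix (Fin n) (Fin n) ℝ)
    (hDdiag : ∀ i j, i ≠ j → D i j = 0) (hDnonneg : ∀ i, 0 ≤ D i i)
    (f : Fin n → ℝ)
    (V : Matrix (Fin d) (Fin d) ℝ) (hV : V = Fᵀ * D * F) (hVinv : IsUnit V)
    (θstar : Fin d → ℝ) (hθ : θstar = V⁻¹.mulVec ((Fᵀ * D).mulVec f))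
    (z : Fin d → ℝ) (hz : z ≠ 0)
    (g : (Fin d → ℝ) → ℝ)
    (hg : g = fun θ => (f - F.mulVec θ) ⬝ᵥ D.mulVec (f - F.mulVec θ)) :
    (z ⬝ᵥ θstar ≤ 0 →
      IsLeast {y : ℝ | ∃ θ : Fin d → ℝ, 0 ≤ z ⬝ᵥ θ ∧ y = g θ}
        (g θstar + (z ⬝ᵥ θstar) ^ 2 / (z ⬝ᵥ V⁻¹.mulVec z)) ∧
      0 ≤ z ⬝ᵥ (θstar - ((z ⬝ᵥ θstar) / (z ⬝ᵥ V⁻¹.mulVec z)) • V⁻¹.mulVec z) ∧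
      g (θstar - ((z ⬝ᵥ θstar) / (z ⬝ᵥ V⁻¹.mulVec z)) • V⁻¹.mulVec z) =
        g θstar + (z ⬝ᵥ θstar) ^ 2 / (z ⬝ᵥ V⁻¹.mulVec z)) ∧
    (0 ≤ z ⬝ᵥ θstar →
      IsLeast {y : ℝ | ∃ θ : Fin d → ℝ, 0 ≤ z ⬝ᵥ θ ∧ y = g θ} (g θstar)) := by
  have hDiag : D.IsDiag := hDdiag
  have hVpos : V.PosDef := by
    have hVpsd : V.PosSemidef := by
      simpa [hV, conjTranspose_eq_transpose_of_trivial] using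
        (PosSemidef.of_isDiag hDiag hDnonneg).conjTranspose_mul_mul_same F
    exact hVpsd.posDef_iff_isUnit.mpr hVinv
  have hnormal : V *ᵥ θstar = (Fᵀ * D) *ᵥ f := by
    rw [hθ, mulVec_mulVec, mul_nonsing_inv _ ((isUnit_iff_isUnit_det V).mp hVinv), one_mulVec]
  have hdecomp : ∀ θ, g θ = g θstar + (θ - θstar) ⬝ᵥ V *ᵥ (θ - θstar) := by
    subst hg hV
    exact residual_dotProduct_eq_add_of_normal_eq hDiag.isSymm hnormal
  exact ⟨fun h ↦ isLeast_halfspace_of_nonpos hVpos hdecomp hz h,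
    isLeast_halfspace_of_nonneg hVpos.posSemidef hdecomp⟩

/-- Minimization of a weighted least-squares objective over a half-space
(Lemma 1, invertible design matrix case). With `V = FᵀDF` invertible,
`θ* = V⁻¹FᵀDf` the unconstrained minimizer, and `z ≠ 0`: if `⟨z, θ*⟩ ≤ 0`
the minimum of `g` over `{θ : ⟨z, θ⟩ ≥ 0}` is `g(θ*) + ⟨z,θ*⟩²/(zᵀV⁻¹z)`,
attained at `θ̂ = θ* − (⟨z,θ*⟩/(zᵀV⁻¹z)) V⁻¹z`; if `⟨z, θ*⟩ ≥ 0` the minimum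
over the half-space is the unconstrained minimum `g(θ*)`. -/
theorem halfspace_least_squares {n d : ℕ} (hn : 0 < n) (hd : 0 < d)
    (F : Matrix (Fin n) (Fin d) ℝ) (D : Matrix (Fin n) (Fin n) ℝ)
    (hDdiag : ∀ i j, i ≠ j → D i j = 0) (hDnonneg : ∀ i, 0 ≤ D i i)
    (f : Fin n → ℝ)
    (V : Matrix (Fin d) (Fin d) ℝ) (hV : V = Fᵀ * D * F) (hVinv : IsUnit V)
    (θstar : Fin d → ℝ) (hθ : θstar = V⁻¹.mulVec ((Fᵀ * D).mulVec f))
    (z : Fin d → ℝ) (hz : z ≠ 0)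
    (g : (Fin d → ℝ) → ℝ)
    (hg : g = fun θ => (f - F.mulVec θ) ⬝ᵥ D.mulVec (f - F.mulVec θ)) :
    (z ⬝ᵥ θstar ≤ 0 →
      IsLeast {y : ℝ | ∃ θ : Fin d → ℝ, 0 ≤ z ⬝ᵥ θ ∧ y = g θ}
        (g θstar + (z ⬝ᵥ θstar) ^ 2 / (z ⬝ᵥ V⁻¹.mulVec z)) ∧
      0 ≤ z ⬝ᵥ (θstar - ((z ⬝ᵥ θstar) / (z ⬝ᵥ V⁻¹.mulVec z)) • V⁻¹.mulVec z) ∧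
      g (θstar - ((z ⬝ᵥ θstar) / (z ⬝ᵥ V⁻¹.mulVec z)) • V⁻¹.mulVec z) =
        g θstar + (z ⬝ᵥ θstar) ^ 2 / (z ⬝ᵥ V⁻¹.mulVec z)) ∧
    (0 ≤ z ⬝ᵥ θstar →
      IsLeast {y : ℝ | ∃ θ : Fin d → ℝ, 0 ≤ z ⬝ᵥ θ ∧ y = g θ} (g θstar)) :=
  halfspace_least_squares_general F D hDdiag hDnonneg f V hV hVinv θstar hθ z hz g hg
end

section
/- Let F be a real n×d matrix, D a diagonal n×n matrix with nonnegative entries, f ∈ ℝⁿ, V := FᵀDF, and let z ∈ ℝ^d satisfy Vz = 0. Then the infimum of g(θ) := (f − Fθ)ᵀD(f − Fθ) over the half-space {θ ∈ ℝ^d : ⟨z, θ⟩ ≥ 0} equals the unconstrained infimum of g over all θ ∈ ℝ^d. -/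
/-! Since `D` is positive semidefinite, `zᵀVz = (Fz)ᵀD(Fz) = 0` forces `D(Fz) = 0`, so `g` is
constant along the line `θ + ℝz`. That line meets the hyperplane `⟨z, ·⟩ = 0`, so every value of
`g` is already attained on the half-space. -/

open Matrix
open scoped ComplexOrder

namespace Matrix

variable {m n R 𝕜 : Type*}

lemma IsDiag.posSemidef [CommRing R] [PartialOrder R] [StarRing R] [StarOrderedRing R]
    {D : Matrix n n R} (hD : D.IsDiag) (hdiag : ∀ i, 0 ≤ D i i) : D.PosSemidef := by
  classical
  rw [← hD.diagonal_diag]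
  exact posSemidef_diagonal_iff.mpr hdiag

lemma PosSemidef.mulVec_mulVec_eq_zero [Fintype m] [Fintype n] [RCLike 𝕜] {D : Matrix m m 𝕜}
    (hD : D.PosSemidef) {F : Matrix m n 𝕜} {z : n → 𝕜} (hz : (Fᴴ * D * F) *ᵥ z = 0) : D *ᵥ (F *ᵥ z) = 0 := by
  rw [← hD.dotProduct_mulVec_zero_iff]
  calc star (F *ᵥ z) ⬝ᵥ D *ᵥ (F *ᵥ z) = star z ⬝ᵥ (Fᴴ * D * F) *ᵥ z := by
        rw [star_mulVec, ← dotProduct_mulVec, Matrix.mul_assoc, ← mulVec_mulVec,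
          ← mulVec_mulVec]
    _ = 0 := by rw [hz, dotProduct_zero]

lemma dotProduct_mulVec_add_of_mulVec_eq_zero [Fintype n] [CommSemiring R] {D : Matrix n n R}
    (hD : D.IsSymm) {u w : n → R} (hw : D *ᵥ w = 0) :
    (u + w) ⬝ᵥ D *ᵥ (u + w) = u ⬝ᵥ D *ᵥ u := by
  have hwu : w ⬝ᵥ D *ᵥ u = 0 := by
    rw [dotProduct_mulVec, ← hD.eq, vecMul_transpose, hw, zero_dotProduct]
  rw [mulVec_add, hw, add_zero, add_dotProduct, hwu, add_zero]

end Matrix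

section Halfspace

variable {n R : Type*} [Fintype n] [Field R] [LinearOrder R] [IsStrictOrderedRing R]

lemma exists_dotProduct_add_smul_eq_zero (z θ : n → R) : ∃ t : R, z ⬝ᵥ (θ + t • z) = 0 := by
  by_cases hz : z = 0
  · exact ⟨0, by simp [hz]⟩
  refine ⟨-(z ⬝ᵥ θ) / (z ⬝ᵥ z), ?_⟩
  have hzz : z ⬝ᵥ z ≠ 0 := fun h => hz (dotProduct_self_eq_zero.mp h)
  rw [dotProduct_add, dotProduct_smul, smul_eq_mul, div_mul_cancel₀ _ hzz, add_neg_cancel]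

lemma image_halfspace_eq_range_of_forall_add_smul {β : Type*} {g : (n → R) → β} {z : n → R}
    (hg : ∀ θ (t : R), g (θ + t • z) = g θ) : g '' {θ | 0 ≤ z ⬝ᵥ θ} = Set.range g := by
  refine (Set.image_subset_range g _).antisymm ?_
  rintro _ ⟨θ, rfl⟩
  obtain ⟨t, ht⟩ := exists_dotProduct_add_smul_eq_zero z θ
  exact ⟨θ + t • z, ht.symm.le, hg θ t⟩

end Halfspace

theorem halfspace_least_squares_ker_general {n d : ℕ}
    (F : Matrix (Fin n) (Fin d) ℝ) (D : Matrix (Fin n) (Fin n) ℝ)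
    (hDdiag : ∀ i j, i ≠ j → D i j = 0) (hDnonneg : ∀ i, 0 ≤ D i i)
    (f : Fin n → ℝ)
    (V : Matrix (Fin d) (Fin d) ℝ) (hV : V = Fᵀ * D * F)
    (z : Fin d → ℝ) (hz : V.mulVec z = 0)
    (g : (Fin d → ℝ) → ℝ)
    (hg : g = fun θ => (f - F.mulVec θ) ⬝ᵥ D.mulVec (f - F.mulVec θ)) :
    sInf {y : ℝ | ∃ θ : Fin d → ℝ, 0 ≤ z ⬝ᵥ θ ∧ y = g θ} =
      sInf {y : ℝ | ∃ θ : Fin d → ℝ, y = g θ} := by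
  have hD : D.IsDiag := fun i j => hDdiag i j
  have hDFz : D *ᵥ (F *ᵥ z) = 0 := (hD.posSemidef hDnonneg).mulVec_mulVec_eq_zero
    (by rwa [conjTranspose_eq_transpose_of_trivial, ← hV])
  have hg_shift : ∀ θ (t : ℝ), g (θ + t • z) = g θ := by
    intro θ t
    have hres : f - F *ᵥ (θ + t • z) = (f - F *ᵥ θ) + (-t) • F *ᵥ z := by
      rw [mulVec_add, mulVec_smul]; module
    simp only [hg, hres]
    exact dotProduct_mulVec_add_of_mulVec_eq_zero hD.isSymm
      (by rw [mulVec_smul, hDFz, smul_zero])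
  have hsets := image_halfspace_eq_range_of_forall_add_smul hg_shift
  simp only [Set.ext_iff, Set.mem_image, Set.mem_range, Set.mem_ofPred_eq] at hsets
  congr 1
  ext y
  simpa only [Set.mem_ofPred_eq, eq_comm] using hsets y

/-- Minimization of a weighted least-squares objective over a half-space
(Lemma 1, kernel case): if `V z = 0` with `V = FᵀDF`, then the constraint
`⟨z, θ⟩ ≥ 0` is vacuous, i.e. the infimum of `g` over the half-space equals
the unconstrained infimum. -/
theorem halfspace_least_squares_ker {n d : ℕ} (hn : 0 < n) (hd : 0 < d)
    (F : Matrix (Fin n) (Fin d) ℝ) (D : Matrix (Fin n) (Fin n) ℝ)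
    (hDdiag : ∀ i j, i ≠ j → D i j = 0) (hDnonneg : ∀ i, 0 ≤ D i i)
    (f : Fin n → ℝ)
    (V : Matrix (Fin d) (Fin d) ℝ) (hV : V = Fᵀ * D * F)
    (z : Fin d → ℝ) (hz : V.mulVec z = 0)
    (g : (Fin d → ℝ) → ℝ)
    (hg : g = fun θ => (f - F.mulVec θ) ⬝ᵥ D.mulVec (f - F.mulVec θ)) :
    sInf {y : ℝ | ∃ θ : Fin d → ℝ, 0 ≤ z ⬝ᵥ θ ∧ y = g θ} =
      sInf {y : ℝ | ∃ θ : Fin d → ℝ, y = g θ} :=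
  halfspace_least_squares_ker_general F D hDdiag hDnonneg f V hV z hz g hg
end

section
/- Let f* be a reward function with a unique optimal arm π* in every context, and let Φ contain a unique realizable representation φ* (i.e., f* ∈ ℱ_{φ*} and f* ∉ ℱ_φ for every φ ∈ Φ with φ ≠ φ*). Suppose there exists ε > 0 such that for every φ ∈ Φ with f* ∉ ℱ_φ and every θ ∈ ℝ^{d_φ}, Σ_{x∈𝒳} (f*(x,π*(x)) − ⟨φ(x,π*(x)), θ⟩)² ≥ ε. Then C(f*, ℱ_Φ) = C(f*, ℱ_{φ*}). -/
/-!
Adding mass `c` on every optimal arm costs no regret, since their gap is zero, while it collects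
information `c/2 · ∑ₓ (f x (π x) - f' x (π x))²` against every alternative `f'`. Alternatives
from a misspecified class are at squared distance at least `ε` from `f` on the optimal arms, so
adding `2/ε` on each optimal arm turns any allocation feasible for `ℱ_{φ*}` into one of the same
cost feasible for `ℱ_Φ`. The reverse inequality holds because `ℱ_{φ*} ⊆ ℱ_Φ`.
-/

open scoped ENNReal

section Complexity

variable {X A : Type*} [Fintype X] [Fintype A]

lemma sum_sum_add_ite_mul [DecidableEq A] (π : X → A) (η g : X → A → ℝ) (c : ℝ) :
    ∑ x, ∑ a, (η x a + if a = π x then c else 0) * g x a =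
      ∑ x, ∑ a, η x a * g x a + c * ∑ x, g x (π x) := by
  simp [add_mul, ite_mul, Finset.sum_add_distrib, Finset.mul_sum]

lemma complexity_mono (f : X → A → ℝ) (π : X → A) {F G : Set (X → A → ℝ)} (h : F ⊆ G) :
    Complexity f π F ≤ Complexity f π G :=
  sInf_le_sInf fun _ ⟨η, hη₀, hηG, hc⟩ => ⟨η, hη₀, fun f' hf' => hηG f' (h hf'), hc⟩

theorem complexity_le_of_separated_on_optimal (f : X → A → ℝ) (π : X → A)
    {F G : Set (X → A → ℝ)} {ε : ℝ} (hε : 0 < ε)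
    (hsep : ∀ f' ∈ F, f' ∉ G → ε ≤ ∑ x, (f x (π x) - f' x (π x)) ^ 2) :
    Complexity f π F ≤ Complexity f π G := by
  classical
  refine sInf_le_sInf ?_
  rintro _ ⟨η, hη₀, hηG, rfl⟩
  refine ⟨fun x a => η x a + if a = π x then 2 / ε else 0, ?_, ?_, ?_⟩
  · intro x a
    have := hη₀ x a
    dsimp only
    split_ifs <;> positivity
  · intro f' hf' halt
    rw [sum_sum_add_ite_mul]
    have hinfo : 0 ≤ ∑ x, ∑ a, η x a * (1 / 2 * (f x a - f' x a) ^ 2) :=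
      Finset.sum_nonneg fun x _ => Finset.sum_nonneg fun a _ => by
        have := hη₀ x a
        positivity
    have hboost : 2 / ε * ∑ x, 1 / 2 * (f x (π x) - f' x (π x)) ^ 2 =
        (∑ x, (f x (π x) - f' x (π x)) ^ 2) / ε := by
      rw [← Finset.mul_sum]
      ring
    rw [hboost]
    by_cases hG : f' ∈ G
    · have : 0 ≤ (∑ x, (f x (π x) - f' x (π x)) ^ 2) / ε := by positivity
      linarith [hηG f' hG halt]
    · have : 1 ≤ (∑ x, (f x (π x) - f' x (π x)) ^ 2) / ε :=
        (one_le_div hε).mpr (hsep f' hf' hG)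
      linarith
  · simp [sum_sum_add_ite_mul]

end Complexity

theorem complexity_eq_of_detectable_misspecification_general
    {X A : Type*} [Fintype X] [Fintype A]
    {ι : Type*} (d : ι → ℕ) (φ : (i : ι) → X → A → Fin (d i) → ℝ)
    (f : X → A → ℝ) (π : X → A)
    (istar : ι)
    (huniq : ∀ i, i ≠ istar → f ∉ linClass (φ i))
    (ε : ℝ) (hε : 0 < ε)
    (hdetect : ∀ i, f ∉ linClass (φ i) → ∀ θ : Fin (d i) → ℝ,
      ε ≤ ∑ x, (f x (π x) - ∑ j, φ i x (π x) j * θ j) ^ 2) :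
    Complexity f π (⋃ i, linClass (φ i)) =
      Complexity f π (linClass (φ istar)) := by
  refine le_antisymm ?_ (complexity_mono f π (Set.subset_iUnion (fun i => linClass (φ i)) istar))
  refine complexity_le_of_separated_on_optimal f π hε fun f' hf' hnot => ?_
  obtain ⟨i, θ, hθ⟩ := Set.mem_iUnion.mp hf'
  have hi : i ≠ istar := by
    rintro rfl
    exact hnot ⟨θ, hθ⟩
  simpa only [hθ] using hdetect i (huniq i hi) θ

/-- If `Φ` contains a unique realizable representation `φ*` and every
misspecified representation has mean squared error at least `ε > 0` when
fitting `f` on the optimal arms (i.e. under the allocation `η* = 1{a = π x}`),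
then representation learning is exactly as hard as the contextual linear
bandit with the known representation `φ*`. -/
theorem complexity_eq_of_detectable_misspecification
    {X A : Type*} [Fintype X] [Fintype A] [Nonempty X] [Nonempty A]
    {ι : Type*} (d : ι → ℕ) (φ : (i : ι) → X → A → Fin (d i) → ℝ)
    (f : X → A → ℝ) (π : X → A) (hπ : UniqueOpt f π)
    (istar : ι) (hreal : f ∈ linClass (φ istar))
    (huniq : ∀ i, i ≠ istar → f ∉ linClass (φ i))
    (ε : ℝ) (hε : 0 < ε)
    (hdetect : ∀ i, f ∉ linClass (φ i) → ∀ θ : Fin (d i) → ℝ,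
      ε ≤ ∑ x, (f x (π x) - ∑ j, φ i x (π x) j * θ j) ^ 2) :
    Complexity f π (⋃ i, linClass (φ i)) =
      Complexity f π (linClass (φ istar)) :=
  complexity_eq_of_detectable_misspecification_general d φ f π istar huniq ε hε hdetect
end

section
/- Let Φ be a set of representations and f* ∈ ℱ_Φ a reward function with a unique optimal arm π* in every context. A representation φ realizable for f* is HLS if for every x ∈ 𝒳 and a ≠ π*(x), φ(x,a) ∈ span{φ(x', π*(x')) : x' ∈ 𝒳}. If Φ contains a representation φ that is realizable for f* (f* ∈ ℱ_φ) but not HLS, then C(f*, ℱ_Φ) > 0. -/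
open scoped ENNReal

/-! A non-HLS feature `φ(x₀,a₀)` can be separated from the span of the optimal features by a linear
functional `g`. Moving the parameter along `g` produces a reward function `f'` in the same linear class
that coincides with `f` on every optimal arm but makes `a₀` strictly better than `π x₀`. As `f'`
differs from `f` only on sub-optimal arms, whose gaps are positive, the information `½(f - f')²`
is at most `K` times the gap on every arm, so every allocation that is informative against `f'`
has regret at least `1 / K`. -/

theorem Submodule.exists_dual_eq_one_of_notMem_span {K V : Type*} [Field K] [AddCommGroup V]
    [Module K V] {s : Set V} {v : V} (hv : v ∉ Submodule.span K s) :
    ∃ g : Module.Dual K V, g v = 1 ∧ ∀ u ∈ s, g u = 0 := by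
  obtain ⟨g, hgv, hg⟩ := exists_dual_map_eq_bot_of_notMem hv inferInstance
  refine ⟨(g v)⁻¹ • g, inv_mul_cancel₀ hgv, fun u hu => ?_⟩
  have hgu : g u ∈ (Submodule.span K s).map g :=
    Submodule.mem_map_of_mem (Submodule.subset_span hu)
  rw [hg, Submodule.mem_bot] at hgu
  simp [hgu]

theorem add_comp_mem_linClass {X A κ : Type*} [Fintype κ] {φ : X → A → κ → ℝ}
    {f : X → A → ℝ} (hf : f ∈ linClass φ) (g : (κ → ℝ) →ₗ[ℝ] ℝ) :
    (fun x a => f x a + g (φ x a)) ∈ linClass φ := by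
  classical
  obtain ⟨θ, hθ⟩ := hf
  refine ⟨θ + fun j => g (Pi.single j 1), fun x a => ?_⟩
  simp only [hθ, g.pi_apply_eq_sum_univ (φ x a), Pi.add_apply, mul_add, Finset.sum_add_distrib,
    smul_eq_mul]
  congr! 4 with j
  funext k
  simp [Pi.single_apply, eq_comm]

theorem exists_pos_forall_le_mul {ι : Type*} [Fintype ι] {c Δ : ι → ℝ} (hc : ∀ p, 0 ≤ c p)
    (hΔ : ∀ p, 0 ≤ Δ p) (hzero : ∀ p, Δ p = 0 → c p = 0) :
    ∃ K > 0, ∀ p, c p ≤ K * Δ p := by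
  -- `c p / Δ p` is the junk value `0` where `Δ p = 0`, so the sum is finite and nonnegative.
  have hratio : ∀ p, 0 ≤ c p / Δ p := fun p => div_nonneg (hc p) (hΔ p)
  refine ⟨1 + ∑ p, c p / Δ p,
    add_pos_of_pos_of_nonneg one_pos (Finset.sum_nonneg fun p _ => hratio p), fun p => ?_⟩
  rcases (hΔ p).eq_or_lt with h | h
  · simp [hzero p h.symm, ← h]
  · calc c p = c p / Δ p * Δ p := (div_mul_cancel₀ _ h.ne').symm
      _ ≤ (1 + ∑ p, c p / Δ p) * Δ p := by
        gcongr
        exact (Finset.single_le_sum (fun q _ => hratio q) (Finset.mem_univ p)).trans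
          (le_add_of_nonneg_left zero_le_one)

theorem ofReal_inv_le_complexity {X A : Type*} [Fintype X] [Fintype A] {f f' : X → A → ℝ}
    {π : X → A} {F : Set (X → A → ℝ)} (hf' : f' ∈ F) (halt : ∃ x a, a ≠ π x ∧ f' x (π x) < f' x a)
    {K : ℝ} (hK : 0 < K) (hbound : ∀ x a, 1 / 2 * (f x a - f' x a) ^ 2 ≤ K * (f x (π x) - f x a)) :
    ENNReal.ofReal K⁻¹ ≤ Complexity f π F := by
  refine le_sInf ?_
  rintro _ ⟨η, hη, hinfo, rfl⟩
  refine ENNReal.ofReal_le_ofReal ((inv_le_iff_one_le_mul₀' hK).mpr ?_)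
  calc 1 ≤ ∑ x, ∑ a, η x a * (1 / 2 * (f x a - f' x a) ^ 2) := hinfo f' hf' halt
    _ ≤ ∑ x, ∑ a, K * (η x a * (f x (π x) - f x a)) := by
      refine Finset.sum_le_sum fun x _ => Finset.sum_le_sum fun a _ => ?_
      exact (mul_le_mul_of_nonneg_left (hbound x a) (hη x a)).trans_eq (mul_left_comm _ _ _)
    _ = K * ∑ x, ∑ a, η x a * (f x (π x) - f x a) := by simp only [Finset.mul_sum]

theorem complexity_pos_of_alternative_eq_on_opt {X A : Type*} [Fintype X] [Fintype A]
    {f f' : X → A → ℝ} {π : X → A} {F : Set (X → A → ℝ)} (hπ : UniqueOpt f π) (hf' : f' ∈ F)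
    (halt : ∃ x a, a ≠ π x ∧ f' x (π x) < f' x a) (hopt : ∀ x, f' x (π x) = f x (π x)) :
    0 < Complexity f π F := by
  have hgap : ∀ x a, 0 ≤ f x (π x) - f x a := fun x a => by
    by_cases ha : a = π x
    · simp [ha]
    · exact (sub_pos.mpr (hπ x a ha)).le
  obtain ⟨K, hK, hbound⟩ := exists_pos_forall_le_mul (c := fun p : X × A =>
      1 / 2 * (f p.1 p.2 - f' p.1 p.2) ^ 2) (Δ := fun p => f p.1 (π p.1) - f p.1 p.2)
    (fun _ => by positivity) (fun p => hgap p.1 p.2) fun ⟨x, a⟩ h => by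
      have ha : a = π x := by_contra fun ha => (sub_pos.mpr (hπ x a ha)).ne' h
      simp [ha, hopt]
  exact (ENNReal.ofReal_pos.mpr (inv_pos.mpr hK)).trans_le
    (ofReal_inv_le_complexity hf' halt hK fun x a => hbound (x, a))

theorem complexity_pos_of_realizable_not_HLS_general
    {X A : Type*} [Fintype X] [Fintype A]
    {ι : Type*} (d : ι → ℕ) (φ : (i : ι) → X → A → Fin (d i) → ℝ)
    (f : X → A → ℝ) (π : X → A) (hπ : UniqueOpt f π)
    (i : ι) (hreal : f ∈ linClass (φ i))
    (hnotHLS : ¬ ∀ x a, a ≠ π x →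
      φ i x a ∈ Submodule.span ℝ (Set.range fun x' => φ i x' (π x'))) :
    0 < Complexity f π (⋃ i, linClass (φ i)) := by
  push Not at hnotHLS
  obtain ⟨x₀, a₀, ha₀, hv⟩ := hnotHLS
  obtain ⟨g, hgv, hg⟩ := Submodule.exists_dual_eq_one_of_notMem_span hv
  set t := f x₀ (π x₀) - f x₀ a₀ + 1
  have hopt : ∀ x, f x (π x) + (t • g) (φ i x (π x)) = f x (π x) := fun x => by
    simp [hg _ ⟨x, rfl⟩]
  refine complexity_pos_of_alternative_eq_on_opt hπ
    (Set.mem_iUnion_of_mem i (add_comp_mem_linClass hreal (t • g))) ⟨x₀, a₀, ha₀, ?_⟩ hopt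
  rw [hopt, LinearMap.smul_apply, hgv, smul_eq_mul, mul_one]
  linarith

/-- If `Φ` contains a realizable representation that is not HLS (some
sub-optimal feature `φ(x,a)` is outside the span of the optimal features
`{φ(x', π*(x'))}`), then sub-logarithmic regret is impossible:
`C(f, ℱ_Φ) > 0`. -/
theorem complexity_pos_of_realizable_not_HLS
    {X A : Type*} [Fintype X] [Fintype A] [Nonempty X] [Nonempty A]
    {ι : Type*} (d : ι → ℕ) (φ : (i : ι) → X → A → Fin (d i) → ℝ)
    (f : X → A → ℝ) (π : X → A) (hπ : UniqueOpt f π)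
    (hf : f ∈ ⋃ i, linClass (φ i))
    (i : ι) (hreal : f ∈ linClass (φ i))
    (hnotHLS : ¬ ∀ x a, a ≠ π x →
      φ i x a ∈ Submodule.span ℝ (Set.range fun x' => φ i x' (π x'))) :
    0 < Complexity f π (⋃ i, linClass (φ i)) :=
  complexity_pos_of_realizable_not_HLS_general d φ f π hπ i hreal hnotHLS
end

section
/- For every ε ∈ (0,1) there exist a single-context bandit instance with 4 arms, a reward function f* : 𝒳 × 𝒜 → ℝ with a unique optimal arm, and a set Φ = {φ_1, φ_2} of two 3-dimensional representations, both realizable for f* (f* ∈ ℱ_{φ_1} ∩ ℱ_{φ_2}), such that C(f*, ℱ_Φ^FR) ≤ 2 while C(f*, ℱ_{φ_1}) ≥ 2/ε and C(f*, ℱ_{φ_2}) ≥ 2/ε. -/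
open scoped ENNReal

/-
Take one context, rewards `f = (1, 1-ε, 1-ε, -1)`, and let both representations contain `f` and
`tilt = (1, 0, 0, 4/ε)`, with `φ₁` adding the indicator of arm 1 and `φ₂` that of arm 2. With `φᵢ`
alone the alternatives `f + t·eᵢ`, `t > ε`, force arm `i`, of gap `ε`, to be pulled `2/ε²` times,
at regret `2/ε`. But the two classes intersect only in `span {f, tilt}`, where every alternative
moves arm 0 or arm 3 by a definite amount: pulling arm 0 eight times and arm 3 once, at regret 2,
already detects each of them.
-/

theorem UniqueOpt.le {X A : Type*} {f : X → A → ℝ} {π : X → A} (hf : UniqueOpt f π)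
    (x : X) (a : A) : f x a ≤ f x (π x) := by
  by_cases ha : a = π x
  · rw [ha]
  · exact (hf x a ha).le

theorem ofReal_two_div_gap_le_complexity {X A : Type*} [Fintype X] [Fintype A]
    [DecidableEq X] [DecidableEq A] {f : X → A → ℝ} {π : X → A} {F : Set (X → A → ℝ)}
    (hf : UniqueOpt f π) {x : X} {a : A} (ha : a ≠ π x)
    (hF : ∀ t, f x (π x) - f x a < t → f + Pi.single x (Pi.single a t) ∈ F) :
    ENNReal.ofReal (2 / (f x (π x) - f x a)) ≤ Complexity f π F := by
  set Δ := f x (π x) - f x a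
  have hΔpos : 0 < Δ := sub_pos.mpr (hf x a ha)
  refine le_sInf ?_
  rintro _ ⟨η, hη, hinfo, rfl⟩
  refine ENNReal.ofReal_le_ofReal ?_
  have hpull : ∀ t, Δ < t → 2 ≤ η x a * t ^ 2 := by
    intro t ht
    have halt : f x (π x) < f x a + t := by linarith
    have h := hinfo _ (hF t ht) ⟨x, a, ha, by simpa [Pi.single_apply, ha.symm] using halt⟩
    simp only [Pi.add_apply, Pi.single_apply, ite_apply, Pi.zero_apply, sub_add_cancel_left,
      neg_sq, ite_pow, zero_pow two_ne_zero, mul_ite, mul_zero, Finset.sum_ite_irrel,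
      Finset.sum_ite_eq', Finset.mem_univ, if_true, Finset.sum_const_zero] at h
    linarith
  have hpullΔ : 2 ≤ η x a * Δ ^ 2 :=
    ge_of_tendsto (((continuous_const.mul (continuous_pow 2)).tendsto Δ).mono_left
      nhdsWithin_le_nhds) (eventually_nhdsWithin_of_forall (s := Set.Ioi Δ) hpull)
  have hterm : ∀ y b, 0 ≤ η y b * (f y (π y) - f y b) :=
    fun y b => mul_nonneg (hη y b) (sub_nonneg.mpr (hf.le y b))
  calc 2 / Δ ≤ η x a * Δ := by
        rw [div_le_iff₀ hΔpos]; nlinarith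
    _ ≤ ∑ b, η x b * (f x (π x) - f x b) :=
        Finset.single_le_sum (fun b _ => hterm x b) (Finset.mem_univ a)
    _ ≤ ∑ y, ∑ b, η y b * (f y (π y) - f y b) :=
        Finset.single_le_sum (f := fun y => ∑ b, η y b * (f y (π y) - f y b))
          (fun y _ => Finset.sum_nonneg fun b _ => hterm y b) (Finset.mem_univ x)

theorem two_le_sq_add_sq_of_two_lt_add {a b : ℝ} (h : 2 < a + b) : 2 ≤ a ^ 2 + b ^ 2 := by
  nlinarith [sq_nonneg (a - b)]

namespace FullyRealizableGap

variable (ε : ℝ)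

noncomputable def reward : Fin 1 → Fin 4 → ℝ := fun _ => ![1, 1 - ε, 1 - ε, -1]

noncomputable def tilt : Fin 4 → ℝ := ![1, 0, 0, 4 / ε]

noncomputable def rep (i : Fin 4) : Fin 1 → Fin 4 → Fin 3 → ℝ :=
  fun x a => ![reward ε x a, (Pi.single i 1 : Fin 4 → ℝ) a, tilt ε a]

variable {ε}

theorem uniqueOpt_reward (hε0 : 0 < ε) : UniqueOpt (reward ε) (fun _ => 0) := by
  intro x a ha
  fin_cases a <;> simp_all [reward]

theorem add_single_mem_linClass_rep (i : Fin 4) (t : ℝ) :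
    reward ε + Pi.single 0 (Pi.single i t) ∈ linClass (rep ε i) := by
  refine ⟨![1, t, 0], fun x a => ?_⟩
  rw [Subsingleton.elim x 0]
  by_cases ha : a = i
  · subst ha; simp [rep, Fin.sum_univ_three]
  · simp [rep, Fin.sum_univ_three, ha]

theorem reward_mem_linClass_rep (i : Fin 4) : reward ε ∈ linClass (rep ε i) := by
  simpa using add_single_mem_linClass_rep (ε := ε) i 0

theorem ofReal_two_div_le_complexity_rep (hε0 : 0 < ε) {i : Fin 4} (hi : reward ε 0 i = 1 - ε) :
    ENNReal.ofReal (2 / ε) ≤ Complexity (reward ε) (fun _ => 0) (linClass (rep ε i)) := by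
  have hi0 : i ≠ 0 := by
    rintro rfl
    simp only [reward, Matrix.cons_val_zero] at hi
    linarith
  have hgap : reward ε 0 0 - reward ε 0 i = ε := by
    rw [hi]
    simp [reward]
  simpa only [hgap] using ofReal_two_div_gap_le_complexity (uniqueOpt_reward hε0) (x := 0) hi0
    fun t _ => add_single_mem_linClass_rep i t

theorem exists_eq_reward_tilt_of_mem_inter (hε0 : 0 < ε) {g : Fin 1 → Fin 4 → ℝ}
    (hg : g ∈ linClass (rep ε 1) ∩ linClass (rep ε 2)) :
    ∃ c t, ∀ a, g 0 a = c * reward ε 0 a + t * tilt ε a := by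
  obtain ⟨⟨θ, hθ⟩, ⟨θ', hθ'⟩⟩ := hg
  have h : ∀ a, ∑ j, rep ε 1 0 a j * θ j = ∑ j, rep ε 2 0 a j * θ' j :=
    fun a => (hθ 0 a).symm.trans (hθ' 0 a)
  have h0 := h 0
  have h1 := h 1
  have h3 := h 3
  simp only [rep, reward, tilt, Fin.sum_univ_three, Matrix.cons_val_zero, Matrix.cons_val_one,
    Matrix.cons_val, Pi.single_apply, Fin.reduceEq, if_true, if_false, one_mul, zero_mul, add_zero,
    neg_mul] at h0 h1 h3
  -- on arms 0 and 3 only `reward` and `tilt` are nonzero, and they are independent there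
  have h2 : θ 2 = θ' 2 := by
    have hdet : (1 + 4 / ε) * (θ 2 - θ' 2) = 0 := by linear_combination h0 + h3
    exact sub_eq_zero.mp ((mul_eq_zero.mp hdet).resolve_left (by positivity))
  have hθ1 : θ 1 = 0 := by linear_combination h1 - (1 - ε) * (h0 - h2)
  refine ⟨θ 0, θ 2, fun a => ?_⟩
  rw [hθ 0 a]
  fin_cases a <;> simp [rep, reward, tilt, Fin.sum_univ_three, hθ1] <;> ring

theorem two_le_of_lt_mul_one_sub (hε0 : 0 < ε) (hε1 : ε < 1) {c t : ℝ}
    (h : c + t < c * (1 - ε)) : 2 ≤ 8 * (1 - c - t) ^ 2 + (1 - c + 4 / ε * t) ^ 2 := by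
  rcases le_or_gt c (1 / 2) with hc | hc
  · have ha : 1 / 2 ≤ 1 - c - t := by nlinarith
    nlinarith [sq_nonneg (1 - c + 4 / ε * t)]
  · have hMt : 4 / ε * t < 4 / ε * (-(ε * c)) := by gcongr; linarith
    rw [mul_neg, ← mul_assoc, div_mul_cancel₀ 4 hε0.ne'] at hMt
    nlinarith [sq_nonneg (1 - c - t)]

theorem complexity_inter_le_two (hε0 : 0 < ε) (hε1 : ε < 1) :
    Complexity (reward ε) (fun _ => 0) (linClass (rep ε 1) ∩ linClass (rep ε 2)) ≤ 2 := by
  refine sInf_le ⟨fun _ => ![8, 0, 0, 1], fun x a => by fin_cases a <;> norm_num, ?_, ?_⟩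
  · rintro g hg ⟨x, a, ha, hlt⟩
    obtain ⟨c, t, hct⟩ := exists_eq_reward_tilt_of_mem_inter hε0 hg
    rw [Subsingleton.elim x 0] at ha hlt
    have hinfo : 2 ≤ 8 * (1 - c - t) ^ 2 + (1 - c + 4 / ε * t) ^ 2 := by
      fin_cases a
      · exact absurd rfl ha
      · exact two_le_of_lt_mul_one_sub hε0 hε1 (by simpa [hct, reward, tilt] using hlt)
      · exact two_le_of_lt_mul_one_sub hε0 hε1 (by simpa [hct, reward, tilt] using hlt)
      · have hsum : 2 < (1 - c - t) + (1 - c + 4 / ε * t) := by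
          simp only [hct, reward, tilt, Fin.reduceFinMk, Matrix.cons_val_zero, Matrix.cons_val,
            mul_one, mul_neg] at hlt
          linarith
        nlinarith [two_le_sq_add_sq_of_two_lt_add hsum, sq_nonneg (1 - c - t)]
    simp only [Fin.sum_univ_one, Fin.sum_univ_four, hct, reward, tilt, Matrix.cons_val_zero,
      Matrix.cons_val_one, Matrix.cons_val, zero_mul, add_zero, one_mul, mul_one, mul_neg]
    nlinarith
  · simp only [Fin.sum_univ_one, Fin.sum_univ_four, reward, Matrix.cons_val_zero,
      Matrix.cons_val_one, Matrix.cons_val]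
    norm_num

end FullyRealizableGap

open FullyRealizableGap

/-- Fully-realizable representation learning can be arbitrarily easier than
learning with either single representation: for any `ε ∈ (0,1)` there is a
4-armed single-context instance with two realizable 3-dimensional
representations such that `C(f, ℱ_Φ^FR) ≤ 2` while `C(f, ℱ_{φ_i}) ≥ 2/ε`. -/
theorem exists_fully_realizable_gap (ε : ℝ) (hε0 : 0 < ε) (hε1 : ε < 1) :
    ∃ (f : Fin 1 → Fin 4 → ℝ) (π : Fin 1 → Fin 4)
      (φ1 φ2 : Fin 1 → Fin 4 → Fin 3 → ℝ),
      UniqueOpt f π ∧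
      f ∈ linClass φ1 ∧ f ∈ linClass φ2 ∧
      Complexity f π (linClass φ1 ∩ linClass φ2) ≤ 2 ∧
      ENNReal.ofReal (2 / ε) ≤ Complexity f π (linClass φ1) ∧
      ENNReal.ofReal (2 / ε) ≤ Complexity f π (linClass φ2) :=
  ⟨reward ε, fun _ => 0, rep ε 1, rep ε 2, uniqueOpt_reward hε0,
    reward_mem_linClass_rep 1, reward_mem_linClass_rep 2, complexity_inter_le_two hε0 hε1,
    ofReal_two_div_le_complexity_rep hε0 rfl, ofReal_two_div_le_complexity_rep hε0 rfl⟩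
end

section
/- Let φ* be a d-dimensional representation whose features span ℝ^d (span{φ*(x,a) : x ∈ 𝒳, a ∈ 𝒜} = ℝ^d), and let f* ∈ ℱ_{φ*} have a unique optimal arm π* in every context. Then C(f*, ℱ_{φ*}) equals the value of the following optimization problem: the infimum, over allocations η such that V_η(φ*) := Σ_{x,a} η(x,a)·φ*(x,a)·φ*(x,a)ᵀ is invertible, of Σ_{x,a} η(x,a)·Δ_{f*}(x,a), subject to Δ_{f*}(x,a)² / (z(x,a)ᵀ V_η(φ*)⁻¹ z(x,a)) ≥ 2 for every x ∈ 𝒳 and a ≠ π*(x), where z(x,a) := φ*(x,π*(x)) − φ*(x,a). -/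
open scoped ENNReal

/-!
For a linear class, an alternative `f' = ⟨φ, θ'⟩` that makes `a` beat `π x` is exactly a
parameter shift `w = θ - θ'` with `⟨φ(x,π x) - φ(x,a), w⟩ > Δ(x,a)`, and its information is
`wᵀ V_η w / 2`. When `V_η` is positive definite, Cauchy–Schwarz in the `V_η`-inner product shows
that the infimum of `wᵀ V_η w` over that half-space is `Δ² / (zᵀ V_η⁻¹ z)`, approached along
`w ∝ V_η⁻¹ z`; so both problems have the same feasible allocations. A feasible allocation of the
original problem need not have invertible `V_η`, but adding `δ` to every weight makes it positive
definite (the features span) at a regret cost `δ ∑ Δ`, which vanishes as `δ → 0`.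
-/

open Matrix Filter Topology

section DesignMatrix

variable {X A n : Type*} [Fintype X] [Fintype A] [Fintype n]

noncomputable def designMatrix (φ : X → A → n → ℝ) (η : X → A → ℝ) : Matrix n n ℝ :=
  ∑ x, ∑ a, η x a • vecMulVec (φ x a) (φ x a)

theorem dotProduct_designMatrix_mulVec (φ : X → A → n → ℝ) (η : X → A → ℝ) (w : n → ℝ) :
    w ⬝ᵥ designMatrix φ η *ᵥ w = ∑ x, ∑ a, η x a * (φ x a ⬝ᵥ w) ^ 2 := by
  simp only [designMatrix, sum_mulVec, dotProduct_sum, smul_mulVec, dotProduct_smul,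
    vecMulVec_mulVec, smul_eq_mul]
  refine Finset.sum_congr rfl fun x _ => Finset.sum_congr rfl fun a _ => ?_
  rw [dotProduct_comm w, op_smul_eq_smul, smul_eq_mul, sq]

theorem designMatrix_posSemidef (φ : X → A → n → ℝ) {η : X → A → ℝ} (hη : ∀ x a, 0 ≤ η x a) :
    (designMatrix φ η).PosSemidef :=
  posSemidef_sum _ fun x _ => posSemidef_sum _ fun a _ =>
    (posSemidef_vecMulVec_self_star (φ x a)).smul (hη x a)

theorem exists_dotProduct_ne_zero_of_span_eq_top {ι : Type*} {v : ι → n → ℝ}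
    (hv : Submodule.span ℝ (Set.range v) = ⊤) {w : n → ℝ} (hw : w ≠ 0) :
    ∃ i, v i ⬝ᵥ w ≠ 0 := by
  by_contra! h
  have : (dotProductBilin ℝ ℝ).flip w = 0 := LinearMap.ext_on_range hv h
  exact hw (dotProduct_self_eq_zero.mp (LinearMap.congr_fun this w))

theorem designMatrix_posDef (φ : X → A → n → ℝ)
    (hspan : Submodule.span ℝ (Set.range fun p : X × A => φ p.1 p.2) = ⊤)
    {η : X → A → ℝ} (hη : ∀ x a, 0 < η x a) : (designMatrix φ η).PosDef := by
  refine .of_dotProduct_mulVec_pos (designMatrix_posSemidef φ fun x a => (hη x a).le).isHermitian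
    fun w hw => ?_
  obtain ⟨⟨x, a⟩, hxa⟩ := exists_dotProduct_ne_zero_of_span_eq_top hspan hw
  rw [star_trivial, dotProduct_designMatrix_mulVec]
  have hterm (x : X) (a : A) : 0 ≤ η x a * (φ x a ⬝ᵥ w) ^ 2 :=
    mul_nonneg (hη x a).le (sq_nonneg _)
  exact Finset.sum_pos' (fun x _ => Finset.sum_nonneg fun a _ => hterm x a)
    ⟨x, Finset.mem_univ _, Finset.sum_pos' (fun a _ => hterm x a)
      ⟨a, Finset.mem_univ _, mul_pos (hη x a) (by positivity)⟩⟩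

theorem dotProduct_designMatrix_mulVec_mono (φ : X → A → n → ℝ) {η η' : X → A → ℝ}
    (h : ∀ x a, η x a ≤ η' x a) (w : n → ℝ) :
    w ⬝ᵥ designMatrix φ η *ᵥ w ≤ w ⬝ᵥ designMatrix φ η' *ᵥ w := by
  simp only [dotProduct_designMatrix_mulVec]
  gcongr with x _ a _
  exact h x a

end DesignMatrix

namespace Matrix.PosDef

variable {n : Type*} [Fintype n] [DecidableEq n] {M : Matrix n n ℝ}

theorem sq_dotProduct_le_s16 (hM : M.PosDef) (z w : n → ℝ) :
    (z ⬝ᵥ w) ^ 2 ≤ (z ⬝ᵥ M⁻¹ *ᵥ z) * (w ⬝ᵥ M *ᵥ w) := by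
  let := M.toSeminormedAddCommGroup hM.posSemidef
  let := M.toInnerProductSpace hM.posSemidef
  have hcs := real_inner_mul_inner_self_le w (M⁻¹ *ᵥ z)
  have hMM : M *ᵥ (M⁻¹ *ᵥ z) = z := by
    rw [mulVec_mulVec, mul_nonsing_inv _ ((isUnit_iff_isUnit_det M).1 hM.isUnit), one_mulVec]
  change ((M *ᵥ (M⁻¹ *ᵥ z)) ⬝ᵥ star w) * ((M *ᵥ (M⁻¹ *ᵥ z)) ⬝ᵥ star w) ≤
    ((M *ᵥ w) ⬝ᵥ star w) * ((M *ᵥ (M⁻¹ *ᵥ z)) ⬝ᵥ star (M⁻¹ *ᵥ z)) at hcs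
  simp only [hMM, star_trivial] at hcs
  rw [sq, mul_comm (z ⬝ᵥ M⁻¹ *ᵥ z)]
  rwa [dotProduct_comm (M *ᵥ w)] at hcs

theorem forall_lt_dotProduct_imp_le_iff (hM : M.PosDef) {z : n → ℝ} (hz : z ≠ 0)
    {Δ : ℝ} (hΔ : 0 ≤ Δ) (c : ℝ) :
    (∀ w, Δ < z ⬝ᵥ w → c ≤ w ⬝ᵥ M *ᵥ w) ↔ c ≤ Δ ^ 2 / (z ⬝ᵥ M⁻¹ *ᵥ z) := by
  set g := z ⬝ᵥ M⁻¹ *ᵥ z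
  have hg : 0 < g := by simpa using hM.inv.dotProduct_mulVec_pos hz
  constructor
  · intro h
    have hlin (t : ℝ) : z ⬝ᵥ t • M⁻¹ *ᵥ z = t * g := by rw [dotProduct_smul, smul_eq_mul]
    have hquad (t : ℝ) : (t • M⁻¹ *ᵥ z) ⬝ᵥ M *ᵥ (t • M⁻¹ *ᵥ z) = t ^ 2 * g := by
      rw [mulVec_smul, mulVec_mulVec, mul_nonsing_inv _ ((isUnit_iff_isUnit_det M).1 hM.isUnit),
        one_mulVec, smul_dotProduct, dotProduct_smul, dotProduct_comm, smul_eq_mul, smul_eq_mul,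
        ← mul_assoc, sq]
    have hlim : Tendsto (fun t : ℝ => t ^ 2 * g) (𝓝[>] (Δ / g)) (𝓝 ((Δ / g) ^ 2 * g)) :=
      ((continuous_pow 2).mul continuous_const).tendsto _ |>.mono_left nhdsWithin_le_nhds
    have hev : ∀ᶠ t in 𝓝[>] (Δ / g), c ≤ t ^ 2 * g :=
      eventually_nhdsWithin_of_forall fun t ht =>
        hquad t ▸ h _ (by rw [hlin]; exact (div_lt_iff₀ hg).1 ht)
    have := ge_of_tendsto hlim hev
    rwa [div_pow, div_mul_eq_mul_div, sq g, mul_div_mul_right _ _ hg.ne'] at this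
  · intro hc w hw
    have hsq : Δ ^ 2 ≤ (z ⬝ᵥ w) ^ 2 := pow_le_pow_left₀ hΔ hw.le 2
    exact hc.trans <| (div_le_iff₀' hg).2 <| hsq.trans (hM.sq_dotProduct_le_s16 z w)

end Matrix.PosDef

section LinearClass

variable {X A n : Type*} [Fintype X] [Fintype A] [Fintype n]

theorem linClass_information_constraint_iff {φ : X → A → n → ℝ} {θ : n → ℝ} {f : X → A → ℝ}
    (hf : ∀ x a, f x a = φ x a ⬝ᵥ θ) (π : X → A) (η : X → A → ℝ) :
    (∀ f' ∈ linClass φ, (∃ x a, a ≠ π x ∧ f' x (π x) < f' x a) →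
        1 ≤ ∑ x, ∑ a, η x a * (1 / 2 * (f x a - f' x a) ^ 2)) ↔
      ∀ x a, a ≠ π x → ∀ w, f x (π x) - f x a < (φ x (π x) - φ x a) ⬝ᵥ w →
        2 ≤ w ⬝ᵥ designMatrix φ η *ᵥ w := by
  have hinfo (θ' : n → ℝ) : ∑ x, ∑ a, η x a * (1 / 2 * (f x a - φ x a ⬝ᵥ θ') ^ 2) =
      (θ - θ') ⬝ᵥ designMatrix φ η *ᵥ (θ - θ') / 2 := by
    simp only [dotProduct_designMatrix_mulVec, hf, dotProduct_sub, Finset.sum_div]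
    refine Finset.sum_congr rfl fun x _ => Finset.sum_congr rfl fun a _ => ?_
    ring
  have hflip (x : X) (a : A) (θ' : n → ℝ) : φ x (π x) ⬝ᵥ θ' < φ x a ⬝ᵥ θ' ↔
      f x (π x) - f x a < (φ x (π x) - φ x a) ⬝ᵥ (θ - θ') := by
    rw [sub_dotProduct, dotProduct_sub, dotProduct_sub, hf, hf]
    constructor <;> intro <;> linarith
  constructor
  · intro h x a hxa w hw
    have := h (fun x a => φ x a ⬝ᵥ (θ - w)) ⟨θ - w, fun _ _ => rfl⟩
      ⟨x, a, hxa, (hflip x a (θ - w)).2 (by rwa [sub_sub_cancel])⟩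
    rw [hinfo, sub_sub_cancel] at this
    linarith
  · rintro h f' ⟨θ', hθ'⟩ ⟨x, a, hxa, hlt⟩
    obtain rfl : f' = fun x a => φ x a ⬝ᵥ θ' := funext₂ hθ'
    have := h x a hxa (θ - θ') ((hflip x a θ').1 hlt)
    rw [hinfo]
    linarith

end LinearClass

theorem le_ofReal_of_forall_pos_le_ofReal_add_mul {b : ℝ≥0∞} {R S : ℝ}
    (h : ∀ δ > 0, b ≤ ENNReal.ofReal (R + δ * S)) : b ≤ ENNReal.ofReal R := by
  have hcont : Continuous fun δ : ℝ => ENNReal.ofReal (R + δ * S) :=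
    ENNReal.continuous_ofReal.comp (by fun_prop)
  have hlim := (hcont.tendsto 0).mono_left (nhdsWithin_le_nhds (s := Set.Ioi 0))
  rw [zero_mul, add_zero] at hlim
  exact ge_of_tendsto hlim (eventually_nhdsWithin_of_forall h)

theorem complexity_single_representation_general
    {X A : Type*} [Fintype X] [Fintype A]
    {d : ℕ} (φ : X → A → Fin d → ℝ)
    (hspan : Submodule.span ℝ (Set.range fun p : X × A => φ p.1 p.2) = ⊤)
    (f : X → A → ℝ) (π : X → A) (hπ : UniqueOpt f π)
    (hf : f ∈ linClass φ) :
    Complexity f π (linClass φ) =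
      sInf { c : ℝ≥0∞ | ∃ η : X → A → ℝ,
        (∀ x a, 0 ≤ η x a) ∧
        IsUnit (∑ x, ∑ a, η x a • Matrix.vecMulVec (φ x a) (φ x a)) ∧
        (∀ x a, a ≠ π x →
          2 ≤ (f x (π x) - f x a) ^ 2 /
            ((fun j => φ x (π x) j - φ x a j) ⬝ᵥ
              (∑ x', ∑ a',
                η x' a' • Matrix.vecMulVec (φ x' a') (φ x' a'))⁻¹.mulVec
                (fun j => φ x (π x) j - φ x a j))) ∧
        c = ENNReal.ofReal (∑ x, ∑ a, η x a * (f x (π x) - f x a)) } := by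
  obtain ⟨θ, hθ⟩ := hf
  have hfθ : ∀ x a, f x a = φ x a ⬝ᵥ θ := hθ
  have hconstraint_iff (η : X → A → ℝ) (hpd : (designMatrix φ η).PosDef) (x : X) (a : A)
      (hxa : a ≠ π x) :
      (∀ w, f x (π x) - f x a < (φ x (π x) - φ x a) ⬝ᵥ w → 2 ≤ w ⬝ᵥ designMatrix φ η *ᵥ w) ↔
        2 ≤ (f x (π x) - f x a) ^ 2 /
          ((φ x (π x) - φ x a) ⬝ᵥ (designMatrix φ η)⁻¹ *ᵥ (φ x (π x) - φ x a)) := by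
    have hgap := sub_pos.2 (hπ x a hxa)
    refine hpd.forall_lt_dotProduct_imp_le_iff (fun hz => ?_) hgap.le 2
    rw [hfθ, hfθ, ← sub_dotProduct, hz, zero_dotProduct] at hgap
    exact hgap.false
  unfold Complexity
  refine le_antisymm (sInf_le_sInf ?_) (le_sInf ?_)
  · rintro _ ⟨η, hη, hunit, hcon, rfl⟩
    have hpd := (designMatrix_posSemidef φ hη).posDef_iff_isUnit.2 hunit
    exact ⟨η, hη, (linClass_information_constraint_iff hfθ π η).2 fun x a hxa =>
      (hconstraint_iff η hpd x a hxa).2 (hcon x a hxa), rfl⟩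
  · rintro _ ⟨η, hη, hcon, rfl⟩
    refine le_ofReal_of_forall_pos_le_ofReal_add_mul (S := ∑ x, ∑ a, (f x (π x) - f x a))
      fun δ hδ => sInf_le ?_
    have hpos (x : X) (a : A) : 0 < η x a + δ := add_pos_of_nonneg_of_pos (hη x a) hδ
    have hpd := designMatrix_posDef φ hspan hpos
    refine ⟨fun x a => η x a + δ, fun x a => (hpos x a).le, hpd.isUnit, fun x a hxa => ?_, ?_⟩
    · refine (hconstraint_iff _ hpd x a hxa).1 fun w hw => ?_
      exact ((linClass_information_constraint_iff hfθ π η).1 hcon x a hxa w hw).trans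
        (dotProduct_designMatrix_mulVec_mono φ (fun x a => le_add_of_nonneg_right hδ.le) w)
    · simp only [add_mul, Finset.sum_add_distrib, Finset.mul_sum]

/-- The complexity of a contextual linear bandit with a single realizable
representation `φ` whose features span `ℝ^d` (Corollary 1): the infimum of
the regret over allocations with invertible design matrix, subject to
`Δ(x,a)² / ‖φ(x,π*(x)) − φ(x,a)‖²_{V_η⁻¹} ≥ 2` for all sub-optimal `(x,a)`. -/
theorem complexity_single_representation
    {X A : Type*} [Fintype X] [Fintype A] [Nonempty X] [Nonempty A]
    {d : ℕ} (φ : X → A → Fin d → ℝ)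
    (hspan : Submodule.span ℝ (Set.range fun p : X × A => φ p.1 p.2) = ⊤)
    (f : X → A → ℝ) (π : X → A) (hπ : UniqueOpt f π)
    (hf : f ∈ linClass φ) :
    Complexity f π (linClass φ) =
      sInf { c : ℝ≥0∞ | ∃ η : X → A → ℝ,
        (∀ x a, 0 ≤ η x a) ∧
        IsUnit (∑ x, ∑ a, η x a • Matrix.vecMulVec (φ x a) (φ x a)) ∧
        (∀ x a, a ≠ π x →
          2 ≤ (f x (π x) - f x a) ^ 2 /
            ((fun j => φ x (π x) j - φ x a j) ⬝ᵥ
              (∑ x', ∑ a',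
                η x' a' • Matrix.vecMulVec (φ x' a') (φ x' a'))⁻¹.mulVec
                (fun j => φ x (π x) j - φ x a j))) ∧
        c = ENNReal.ofReal (∑ x, ∑ a, η x a * (f x (π x) - f x a)) } :=
  complexity_single_representation_general φ hspan f π hπ hf
end
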